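/- arXiv:2504.13110 — 6 statements merged into one kernel-verified Lean document; each statement's English description precedes it below -/
import Mathlib

section
/- Let a, b ≥ 0 and ε ≥ 0. Suppose X : [0,∞) → ℝ is continuously differentiable with X(0) = 0 and satisfies the differential inequality X'(t) ≤ -a·X(t) + b·∫₀ᵗ X(s) ds + ε for all t ≥ 0. Then for all t ≥ 0, X(t) ≤ exp(b·t/a) · ε / √(a² + 4b). -/
open MeasureTheory intervalIntegral Set Real

/-!
With `Y t = ∫₀ᵗ X`, the inequality reads `X' ≤ -a X + b Y + ε`, `Y' = X`.
If `μ + ν = -a` and `μ ν = -b`, then `Z = X - μ Y` satisfies the scalar inequality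
`Z' ≤ ν Z + ε`, `Z 0 = 0`, so Grönwall gives `Z t ≤ ε (exp (ν t) - 1) / ν`.
Taking for `(μ, ν)` both orderings of the characteristic roots `r₁ ≥ 0 ≥ r₂` and eliminating `Y`
yields `√(a² + 4b) X t ≤ ε (exp (r₁ t) - exp (r₂ t)) ≤ ε exp (r₁ t)`, and `r₁ ≤ b / a`.
-/

theorem hasDerivWithinAt_integral_Icc {E : Type*} [NormedAddCommGroup E] [NormedSpace ℝ E]
    [CompleteSpace E] {f : ℝ → E} {a b x : ℝ} (hf : ContinuousOn f (Icc a b)) (hx : x ∈ Icc a b) :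
    HasDerivWithinAt (fun u => ∫ s in a..u, f s) (f x) (Icc a b) x := by
  have : Fact (x ∈ Icc a b) := ⟨hx⟩
  refine integral_hasDerivWithinAt_right (t := Icc a b) ?_
    (hf.stronglyMeasurableAtFilter_nhdsWithin measurableSet_Icc x) (hf x hx)
  exact (hf.mono (uIcc_subset_Icc (left_mem_Icc.2 (hx.1.trans hx.2)) hx)).intervalIntegrable

theorem le_gronwallBound_of_deriv_right_le {f f' : ℝ → ℝ} {δ K ε a b : ℝ}
    (hf : ContinuousOn f (Icc a b)) (hf' : ∀ x ∈ Ico a b, HasDerivWithinAt f (f' x) (Ici x) x)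
    (ha : f a ≤ δ) (bound : ∀ x ∈ Ico a b, f' x ≤ K * f x + ε) :
    ∀ x ∈ Icc a b, f x ≤ gronwallBound δ K ε (x - a) :=
  le_gronwallBound_of_liminf_deriv_right_le hf
    (fun x hx _ hr => (hf' x hx).liminf_right_slope_le hr) ha bound

theorem mul_gronwallBound_zero (K ε x : ℝ) :
    K * gronwallBound 0 K ε x = ε * (exp (K * x) - 1) := by
  by_cases hK : K = 0
  · simp [hK]
  · rw [gronwallBound_of_K_ne_0 hK]
    field_simp
    ring

theorem sub_mul_integral_le_gronwallBound {a b ε μ ν : ℝ} {X : ℝ → ℝ} (hX0 : X 0 = 0)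
    (hdiff : ∀ t, 0 ≤ t → DifferentiableAt ℝ X t)
    (hineq : ∀ t, 0 ≤ t → deriv X t ≤ -a * X t + b * (∫ s in (0:ℝ)..t, X s) + ε)
    (hsum : μ + ν = -a) (hprod : μ * ν = -b) {t : ℝ} (ht : 0 ≤ t) :
    X t - μ * (∫ s in (0:ℝ)..t, X s) ≤ gronwallBound 0 ν ε t := by
  have hX : ContinuousOn X (Icc 0 t) := fun x hx => (hdiff x hx.1).continuousAt.continuousWithinAt
  have hY := fun x (hx : x ∈ Icc 0 t) => hasDerivWithinAt_integral_Icc hX hx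
  have hZ : ∀ x ∈ Ico 0 t, HasDerivWithinAt (fun u => X u - μ * ∫ s in (0:ℝ)..u, X s)
      (deriv X x - μ * X x) (Ici x) x := fun x hx =>
    (hdiff x hx.1).hasDerivAt.hasDerivWithinAt.sub <|
      ((hY x (Ico_subset_Icc_self hx)).mono_of_mem_nhdsWithin (Icc_mem_nhdsGE_of_mem hx)).const_mul μ
  have hZcont : ContinuousOn (fun u => X u - μ * ∫ s in (0:ℝ)..u, X s) (Icc 0 t) :=
    hX.sub (ContinuousOn.const_mul (fun x hx => (hY x hx).continuousWithinAt) μ)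
  simpa using le_gronwallBound_of_deriv_right_le hZcont hZ (by simp [hX0])
    (fun x hx => by
      linear_combination hineq x hx.1 - X x * hsum + (∫ s in (0:ℝ)..x, X s) * hprod)
    t ⟨ht, le_rfl⟩

theorem stmt0_general (a b ε : ℝ) (ha : 0 < a) (hb : 0 ≤ b) (hε : 0 ≤ ε)
    (X : ℝ → ℝ)
    (hX0 : X 0 = 0)
    (hdiff : ∀ t, 0 ≤ t → DifferentiableAt ℝ X t)
    (hineq : ∀ t, 0 ≤ t →
      deriv X t ≤ -a * X t + b * (∫ s in (0:ℝ)..t, X s) + ε) :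
    ∀ t, 0 ≤ t → X t ≤ Real.exp (b * t / a) * ε / Real.sqrt (a ^ 2 + 4 * b) := by
  intro t ht
  set s := √(a ^ 2 + 4 * b)
  have hs2 : s ^ 2 = a ^ 2 + 4 * b := sq_sqrt (by positivity)
  have has : a ≤ s := by nlinarith [sqrt_nonneg (a ^ 2 + 4 * b)]
  set r₁ := (-a + s) / 2 with hr₁_def
  set r₂ := (-a - s) / 2 with hr₂_def
  have h₁ := sub_mul_integral_le_gronwallBound hX0 hdiff hineq (μ := r₂) (ν := r₁)
    (by ring) (by linear_combination -hs2 / 4) ht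
  have h₂ := sub_mul_integral_le_gronwallBound hX0 hdiff hineq (μ := r₁) (ν := r₂)
    (by ring) (by linear_combination -hs2 / 4) ht
  have hr₁ : r₁ ≤ b / a := by
    rw [div_le_div_iff₀ two_pos ha]
    nlinarith [sq_nonneg (s * a - a ^ 2 - 2 * b)]
  rw [le_div_iff₀ (ha.trans_le has)]
  calc X t * s = r₁ * (X t - r₂ * ∫ u in (0:ℝ)..t, X u)
        - r₂ * (X t - r₁ * ∫ u in (0:ℝ)..t, X u) := by ring
    _ ≤ r₁ * gronwallBound 0 r₁ ε t - r₂ * gronwallBound 0 r₂ ε t := by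
        gcongr ?_ - ?_
        · exact mul_le_mul_of_nonneg_left h₁ (by rw [hr₁_def]; linarith)
        · exact mul_le_mul_of_nonpos_left h₂ (by rw [hr₂_def]; linarith)
    _ = ε * (exp (r₁ * t) - exp (r₂ * t)) := by
        rw [mul_gronwallBound_zero, mul_gronwallBound_zero]; ring
    _ ≤ ε * exp (b * t / a) := by
        gcongr
        calc exp (r₁ * t) - exp (r₂ * t) ≤ exp (r₁ * t) := by linarith [exp_pos (r₂ * t)]
          _ ≤ exp (b * t / a) := by
            rw [exp_le_exp, mul_div_right_comm]; exact mul_le_mul_of_nonneg_right hr₁ ht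
    _ = exp (b * t / a) * ε := mul_comm _ _

/-- ODE comparison principle for the delayed-feedback linear differential inequality. -/
theorem stmt0 (a b ε : ℝ) (ha : 0 < a) (hb : 0 ≤ b) (hε : 0 ≤ ε)
    (X : ℝ → ℝ)
    (hX0 : X 0 = 0)
    (hdiff : ∀ t, 0 ≤ t → DifferentiableAt ℝ X t)
    (hcont : ContinuousOn (deriv X) (Set.Ici 0))
    (hineq : ∀ t, 0 ≤ t →
      deriv X t ≤ -a * X t + b * (∫ s in (0:ℝ)..t, X s) + ε) :
    ∀ t, 0 ≤ t → X t ≤ Real.exp (b * t / a) * ε / Real.sqrt (a ^ 2 + 4 * b) :=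
  stmt0_general a b ε ha hb hε X hX0 hdiff hineq
end

section
/- Let Z : [0,∞) → ℝ be continuous, Z(0) = 0, and suppose for a, b ≥ 0 and ε > 0 that Z'(t) ≤ -a·Z(t) + b·∫₀ᵗ Z(s) ds − ε for all t. Then Z(t) ≤ 0 for all t ≥ 0. -/
/-!
Real induction on `{t | Z t ≤ 0}`: if `Z ≤ 0` on `[0, x]`, then `∫₀ˣ Z ≤ 0`, so at a zero `x` of `Z`
the hypothesis gives `Z'(x) ≤ -ε < 0` and `Z` stays nonpositive just to the right of `x`;
where `Z x < 0` this follows from continuity.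
-/

open Topology Filter Set

theorem HasDerivAt.eventually_lt_nhdsGT {f : ℝ → ℝ} {f' x : ℝ} (hf : HasDerivAt f f' x)
    (hf' : f' < 0) : ∀ᶠ z in 𝓝[>] x, f z < f x := by
  filter_upwards [hf.hasDerivWithinAt.limsup_slope_le' (lt_irrefl x) hf', self_mem_nhdsWithin]
    with z hslope hxz
  rw [slope_def_field, div_neg_iff] at hslope
  rcases hslope with ⟨-, hneg⟩ | ⟨hlt, -⟩
  · exact absurd (sub_pos.mpr hxz) hneg.not_gt
  · linarith

theorem HasDerivAt.eventually_nonpos_nhdsGT {f : ℝ → ℝ} {f' x : ℝ} (hf : HasDerivAt f f' x)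
    (hx : f x ≤ 0) (hf' : f x = 0 → f' < 0) : ∀ᶠ z in 𝓝[>] x, f z ≤ 0 := by
  rcases hx.lt_or_eq with hneg | hzero
  · exact nhdsWithin_le_nhds <|
      (hf.continuousAt.eventually_lt continuousAt_const hneg).mono fun _ => le_of_lt
  · exact (hf.eventually_lt_nhdsGT (hf' hzero)).mono fun _ hz => (hz.trans_eq hzero).le

theorem stmt2_general (a b ε : ℝ) (hb : 0 ≤ b) (hε : 0 < ε)
    (Z : ℝ → ℝ) (hZcont : Continuous Z) (hZ0 : Z 0 = 0)
    (hdiff : ∀ t, 0 ≤ t → DifferentiableAt ℝ Z t)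
    (hineq : ∀ t, 0 ≤ t →
      deriv Z t ≤ -a * Z t + b * (∫ s in (0:ℝ)..t, Z s) - ε) :
    ∀ t, 0 ≤ t → Z t ≤ 0 := by
  intro t ht
  have hclosed : IsClosed ({u | Z u ≤ 0} ∩ Icc 0 t) :=
    (isClosed_le hZcont continuous_const).inter isClosed_Icc
  refine hclosed.Icc_subset_of_forall_mem_nhdsGT_of_Icc_subset hZ0.le
    (fun x hx hpast => ?_) ⟨ht, le_rfl⟩
  have hint : ∫ s in (0:ℝ)..x, Z s ≤ 0 := by
    have : 0 ≤ ∫ s in (0:ℝ)..x, -Z s :=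
      intervalIntegral.integral_nonneg hx.1 fun u hu => neg_nonneg.mpr (hpast hu)
    rwa [intervalIntegral.integral_neg, neg_nonneg] at this
  refine (hdiff x hx.1).hasDerivAt.eventually_nonpos_nhdsGT (hpast ⟨hx.1, le_rfl⟩) fun hZx => ?_
  have hderiv := hineq x hx.1
  rw [hZx] at hderiv
  linarith [mul_nonpos_of_nonneg_of_nonpos hb hint]

/-- Nonpositivity lemma: a differentiable function starting at `0` whose derivative satisfies
`Z' ≤ -a·Z + b·∫₀ᵗ Z − ε` with `ε > 0` stays nonpositive. -/
theorem stmt2 (a b ε : ℝ) (ha : 0 ≤ a) (hb : 0 ≤ b) (hε : 0 < ε)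
    (Z : ℝ → ℝ) (hZcont : Continuous Z) (hZ0 : Z 0 = 0)
    (hdiff : ∀ t, 0 ≤ t → DifferentiableAt ℝ Z t)
    (hineq : ∀ t, 0 ≤ t →
      deriv Z t ≤ -a * Z t + b * (∫ s in (0:ℝ)..t, Z s) - ε) :
    ∀ t, 0 ≤ t → Z t ≤ 0 :=
  stmt2_general a b ε hb hε Z hZcont hZ0 hdiff hineq
end

section
/- Let Λ be a finite index set. For each λ ∈ Λ, let B_λ be a finite set of functions v : W → ℝᵈ (for some set W), and let η_λ > 0 satisfy Σ_{v ∈ B_λ} v(w) v(w)ᵀ ⪯ η_λ² I_d for all w ∈ W, with Σ_{λ∈Λ} η_λ² ≤ C_b. Given Δ : [m] → ℝᵈ and weights w₁,...,w_m ∈ W, define φ_v(Δ) := |m⁻¹ Σ_i v(wᵢ)ᵀ Δ(i)| and Ψ(Δ) := Σ_{λ∈Λ} η_λ (Σ_{v∈B_λ} φ_v(Δ)²)^{1/2}. Then for any G : [m] → ℝᵈ, the directional derivative of Ψ at Δ in direction G satisfies |⟨∇Ψ(Δ), G⟩| ≤ C_b · m⁻¹ Σ_i ‖G(i)‖, where ⟨∇Ψ(Δ),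 G⟩ := (d/ds) Ψ(Δ + sG)|_{s=0}. -/
/-!
Along the line `s ↦ Δ + s • G`, the `λ`-th inner sum of `Ψ` is the Euclidean norm `‖a_λ + s • b_λ‖`
of an affine function of `s`, where `b_λ` is the averaged frame coefficient vector of `G`. Hence `Ψ`
is Lipschitz along the line with constant `∑ η_λ ‖b_λ‖`, which bounds the derivative without
computing it. By the triangle inequality and the frame bound applied to each `G i`,
`‖b_λ‖ ≤ η_λ · m⁻¹ ∑ᵢ ‖G i‖`, and `∑ η_λ² ≤ C_b` finishes.
-/

open Finset

theorem abs_le_of_hasDerivAt_sum_mul_norm_add_smul {Λ : Type*} [Fintype Λ] {F : Λ → Type*}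
    [∀ l, SeminormedAddCommGroup (F l)] [∀ l, NormedSpace ℝ (F l)]
    (c : Λ → ℝ) (a b : ∀ l, F l) {D : ℝ}
    (hD : HasDerivAt (fun s : ℝ => ∑ l, c l * ‖a l + s • b l‖) D 0) :
    |D| ≤ ∑ l, |c l| * ‖b l‖ := by
  refine Real.norm_eq_abs D ▸ hD.le_of_lip' (by positivity) (.of_forall fun s => ?_)
  calc ‖∑ l, c l * ‖a l + s • b l‖ - ∑ l, c l * ‖a l + (0 : ℝ) • b l‖‖
      = |∑ l, c l * (‖a l + s • b l‖ - ‖a l‖)| := by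
        simp only [zero_smul, add_zero, mul_sub, sum_sub_distrib, Real.norm_eq_abs]
    _ ≤ ∑ l, |c l| * |‖a l + s • b l‖ - ‖a l‖| := by
        simpa only [abs_mul] using
          abs_sum_le_sum_abs (fun l => c l * (‖a l + s • b l‖ - ‖a l‖)) univ
    _ ≤ ∑ l, |c l| * (‖b l‖ * ‖s - 0‖) := by
        gcongr with l
        simpa [norm_smul, mul_comm] using abs_norm_sub_norm_le (a l + s • b l) (a l)
    _ = (∑ l, |c l| * ‖b l‖) * ‖s - 0‖ := by simp only [sum_mul, mul_assoc]

section Frame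

variable {E : Type*} [NormedAddCommGroup E] [InnerProductSpace ℝ E] {ι : Type*}

def analysisOp (v : ι → E) : E →ₗ[ℝ] EuclideanSpace ℝ ι where
  toFun u := WithLp.toLp 2 fun j => inner ℝ (v j) u
  map_add' x y := by ext j; simp [inner_add_right]
  map_smul' c x := by ext j; simp [real_inner_smul_right]

theorem analysisOp_apply (v : ι → E) (u : E) (j : ι) :
    analysisOp v u j = inner ℝ (v j) u := rfl

theorem norm_analysisOp_le [Fintype ι] {v : ι → E} {u : E} {η : ℝ}
    (hv : ∑ j, inner ℝ (v j) u ^ 2 ≤ η ^ 2 * ‖u‖ ^ 2) : ‖analysisOp v u‖ ≤ |η| * ‖u‖ := by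
  rw [EuclideanSpace.norm_eq, ← Real.sqrt_sq (by positivity : 0 ≤ |η| * ‖u‖), mul_pow, sq_abs]
  gcongr
  simpa only [analysisOp_apply, Real.norm_eq_abs, sq_abs] using hv

noncomputable def meanAnalysisOp {m : ℕ} (v : Fin m → ι → E) :
    (Fin m → E) →ₗ[ℝ] EuclideanSpace ℝ ι :=
  (m : ℝ)⁻¹ • ∑ i, analysisOp (v i) ∘ₗ LinearMap.proj i

theorem meanAnalysisOp_apply {m : ℕ} (v : Fin m → ι → E) (Δ : Fin m → E) (j : ι) :
    meanAnalysisOp v Δ j = (m : ℝ)⁻¹ * ∑ i, inner ℝ (v i j) (Δ i) := by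
  simp [meanAnalysisOp, analysisOp_apply]

theorem norm_meanAnalysisOp [Fintype ι] {m : ℕ} (v : Fin m → ι → E) (Δ : Fin m → E) :
    ‖meanAnalysisOp v Δ‖ = √(∑ j, |(m : ℝ)⁻¹ * ∑ i, inner ℝ (v i j) (Δ i)| ^ 2) := by
  simp [EuclideanSpace.norm_eq, meanAnalysisOp_apply]

theorem norm_meanAnalysisOp_le [Fintype ι] {m : ℕ} {v : Fin m → ι → E} {η : ℝ}
    (hv : ∀ i u, ∑ j, inner ℝ (v i j) u ^ 2 ≤ η ^ 2 * ‖u‖ ^ 2) (G : Fin m → E) :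
    ‖meanAnalysisOp v G‖ ≤ |η| * ((m : ℝ)⁻¹ * ∑ i, ‖G i‖) := by
  calc ‖meanAnalysisOp v G‖ = (m : ℝ)⁻¹ * ‖∑ i, analysisOp (v i) (G i)‖ := by
        simp [meanAnalysisOp, norm_smul]
    _ ≤ (m : ℝ)⁻¹ * ∑ i, |η| * ‖G i‖ := by
        gcongr
        exact (norm_sum_le _ _).trans (sum_le_sum fun i _ => norm_analysisOp_le (hv i (G i)))
    _ = |η| * ((m : ℝ)⁻¹ * ∑ i, ‖G i‖) := by rw [← mul_sum]; ring

end Frame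

theorem stmt8_general {W : Type*} (d m : ℕ) {Λ : Type*} [Fintype Λ]
    (N : Λ → ℕ) (V : (l : Λ) → Fin (N l) → W → EuclideanSpace ℝ (Fin d))
    (η : Λ → ℝ) (Cb : ℝ)
    (hframe : ∀ (l : Λ) (w : W) (u : EuclideanSpace ℝ (Fin d)),
      ∑ j, (inner ℝ (V l j w) u : ℝ) ^ 2 ≤ (η l) ^ 2 * ‖u‖ ^ 2)
    (hsum : ∑ l, (η l) ^ 2 ≤ Cb)
    (ws : Fin m → W) (Δ G : Fin m → EuclideanSpace ℝ (Fin d))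
    (Ψ : (Fin m → EuclideanSpace ℝ (Fin d)) → ℝ)
    (hΨ : ∀ Δ' : Fin m → EuclideanSpace ℝ (Fin d),
      Ψ Δ' = ∑ l, η l * Real.sqrt (∑ j,
        |(m : ℝ)⁻¹ * ∑ i, (inner ℝ (V l j (ws i)) (Δ' i) : ℝ)| ^ 2))
    (D : ℝ)
    (hD : HasDerivAt (fun s : ℝ => Ψ (fun i => Δ i + s • G i)) D 0) :
    |D| ≤ Cb * ((m : ℝ)⁻¹ * ∑ i, ‖G i‖) := by
  set A := fun l => meanAnalysisOp fun i j => V l j (ws i)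
  have hline : (fun s : ℝ => Ψ (fun i => Δ i + s • G i)) =
      fun s => ∑ l, η l * ‖A l Δ + s • A l G‖ := by
    funext s
    simp only [hΨ, A, ← norm_meanAnalysisOp, ← map_smul, ← map_add]
    rfl
  rw [hline] at hD
  calc |D| ≤ ∑ l, |η l| * ‖A l G‖ := abs_le_of_hasDerivAt_sum_mul_norm_add_smul _ _ _ hD
    _ ≤ ∑ l, |η l| * (|η l| * ((m : ℝ)⁻¹ * ∑ i, ‖G i‖)) := by
        gcongr with l
        exact norm_meanAnalysisOp_le (fun i => hframe l (ws i)) G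
    _ = (∑ l, η l ^ 2) * ((m : ℝ)⁻¹ * ∑ i, ‖G i‖) := by
        simp only [sum_mul, ← mul_assoc, ← sq, sq_abs]
    _ ≤ Cb * ((m : ℝ)⁻¹ * ∑ i, ‖G i‖) := by gcongr

/-- L1 perturbation property of the balanced potential `Ψ`: the directional derivative of
`Ψ` at `Δ` in direction `G` is bounded by `C_b · m⁻¹ Σ_i ‖G(i)‖`. -/
theorem stmt8 {W : Type*} (d m : ℕ) (hm : 0 < m) {Λ : Type*} [Fintype Λ]
    (N : Λ → ℕ) (V : (l : Λ) → Fin (N l) → W → EuclideanSpace ℝ (Fin d))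
    (η : Λ → ℝ) (hη : ∀ l, 0 < η l) (Cb : ℝ)
    (hframe : ∀ (l : Λ) (w : W) (u : EuclideanSpace ℝ (Fin d)),
      ∑ j, (inner ℝ (V l j w) u : ℝ) ^ 2 ≤ (η l) ^ 2 * ‖u‖ ^ 2)
    (hsum : ∑ l, (η l) ^ 2 ≤ Cb)
    (ws : Fin m → W) (Δ G : Fin m → EuclideanSpace ℝ (Fin d))
    (Ψ : (Fin m → EuclideanSpace ℝ (Fin d)) → ℝ)
    (hΨ : ∀ Δ' : Fin m → EuclideanSpace ℝ (Fin d),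
      Ψ Δ' = ∑ l, η l * Real.sqrt (∑ j,
        |(m : ℝ)⁻¹ * ∑ i, (inner ℝ (V l j (ws i)) (Δ' i) : ℝ)| ^ 2))
    (hnonzero : ∀ l : Λ,
      0 < ∑ j, |(m : ℝ)⁻¹ * ∑ i, (inner ℝ (V l j (ws i)) (Δ i) : ℝ)| ^ 2)
    (D : ℝ)
    (hD : HasDerivAt (fun s : ℝ => Ψ (fun i => Δ i + s • G i)) D 0) :
    |D| ≤ Cb * ((m : ℝ)⁻¹ * ∑ i, ‖G i‖) :=
  stmt8_general d m N V η Cb hframe hsum ws Δ G Ψ hΨ D hD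
end

section
/- Let E : [0, T] → [0,∞) be continuous with E(0) = 0, and suppose that for constants J, ε > 0 and all t ∈ [0,T], E(t) ≤ 2Jt(2ε + E(t)²). If J²T²ε ≤ 1/64, then for all t ∈ [0,T], E(t) ≤ (1 − √(1 − 32J²t²ε))/(4Jt) ≤ 8Jtε. -/
/-!
Multiplying the self-bound by `8Jt` turns it into `(1 - φ)² ≥ 1 - x` for `φ = 4JtE(t)` and
`x = 32J²t²ε`. Since `x ≤ 1/2`, the value `φ = 1` is excluded, so the continuous `φ`, which
starts at `0`, stays below `1`; then `√(1 - x) ≤ 1 - φ`, which is the first bound, and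
`1 - √(1 - x) ≤ x` gives the second.
-/

open Set

lemma IsPreconnected.lt_of_forall_ne {X α : Type*} [TopologicalSpace X] [LinearOrder α]
    [TopologicalSpace α] [OrderClosedTopology α] {s : Set X} (hs : IsPreconnected s)
    {f : X → α} (hf : ContinuousOn f s) {a b : X} (ha : a ∈ s) (hb : b ∈ s) {c : α}
    (hfa : f a < c) (hne : ∀ x ∈ s, f x ≠ c) : f b < c := by
  by_contra! hfb
  obtain ⟨x, hx, hfx⟩ := hs.intermediate_value₂ ha hb hf continuousOn_const hfa.le hfb
  exact hne x hx hfx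

lemma one_sub_le_sq_of_le_mul_add_sq {J t ε e : ℝ} (hJt : 0 ≤ J * t)
    (h : e ≤ 2 * J * t * (2 * ε + e ^ 2)) :
    1 - 32 * J ^ 2 * t ^ 2 * ε ≤ (1 - 4 * J * t * e) ^ 2 := by
  nlinarith [mul_nonneg hJt (sub_nonneg.2 h)]

lemma le_one_sub_sqrt_of_le_sq {φ y : ℝ} (hφ : φ ≤ 1) (hy : y ≤ (1 - φ) ^ 2) :
    φ ≤ 1 - √y := by
  have : √y ≤ 1 - φ := (Real.sqrt_le_left (sub_nonneg.2 hφ)).2 hy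
  linarith

lemma one_sub_sqrt_one_sub_le_self {x : ℝ} (h0 : 0 ≤ x) (h1 : x ≤ 1) : 1 - √(1 - x) ≤ x := by
  have : 1 - x ≤ √(1 - x) := Real.le_sqrt_of_sq_le (by nlinarith)
  linarith

theorem stmt11_general (T J ε : ℝ) (hJ : 0 < J) (hε : 0 < ε)
    (E : ℝ → ℝ) (hEcont : ContinuousOn E (Set.Icc 0 T))
    (hE0 : E 0 = 0)
    (hEineq : ∀ t ∈ Set.Icc (0 : ℝ) T, E t ≤ 2 * J * t * (2 * ε + E t ^ 2))
    (hdisc : J ^ 2 * T ^ 2 * ε ≤ 1 / 64) :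
    ∀ t ∈ Set.Icc (0 : ℝ) T,
      E t ≤ (1 - Real.sqrt (1 - 32 * J ^ 2 * t ^ 2 * ε)) / (4 * J * t) ∧
      (1 - Real.sqrt (1 - 32 * J ^ 2 * t ^ 2 * ε)) / (4 * J * t) ≤ 8 * J * t * ε := by
  have hx : ∀ t ∈ Icc (0 : ℝ) T, 32 * J ^ 2 * t ^ 2 * ε ≤ 1 / 2 := fun t ht => by
    have : t ^ 2 ≤ T ^ 2 := pow_le_pow_left₀ ht.1 ht.2 2
    nlinarith [mul_le_mul_of_nonneg_left this (by positivity : 0 ≤ J ^ 2 * ε)]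
  have hquad : ∀ t ∈ Icc (0 : ℝ) T, 1 - 32 * J ^ 2 * t ^ 2 * ε ≤ (1 - 4 * J * t * E t) ^ 2 :=
    fun t ht => one_sub_le_sq_of_le_mul_add_sq (mul_nonneg hJ.le ht.1) (hEineq t ht)
  intro t ht
  have ht0 : 0 ≤ t := ht.1
  have hsmall : 4 * J * t * E t < 1 := by
    refine isPreconnected_Icc.lt_of_forall_ne (f := fun u => 4 * J * u * E u) (by fun_prop)
      ⟨le_rfl, ht0.trans ht.2⟩ ht (by simp [hE0]) fun u hu hu1 => ?_
    have := hquad u hu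
    rw [hu1, sub_self, zero_pow two_ne_zero] at this
    linarith [hx u hu]
  refine ⟨?_, div_le_of_le_mul₀ (by positivity) (by positivity) ?_⟩
  · rcases ht0.eq_or_lt with rfl | htpos
    · simp [hE0]
    · rw [le_div_iff₀ (by positivity), mul_comm]
      exact le_one_sub_sqrt_of_le_sq hsmall.le (hquad t ht)
  · calc 1 - √(1 - 32 * J ^ 2 * t ^ 2 * ε) ≤ 32 * J ^ 2 * t ^ 2 * ε :=
          one_sub_sqrt_one_sub_le_self (by positivity) (by linarith [hx t ht])
      _ = 8 * J * t * ε * (4 * J * t) := by ring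

/-- Inductive squared-error bound: a continuous `E` with `E(0)=0` satisfying the quadratic
self-bound `E(t) ≤ 2Jt(2ε + E(t)²)` stays on the small-solution branch, which is bounded
by `8Jtε`, provided `J²T²ε ≤ 1/64`. -/
theorem stmt11 (T J ε : ℝ) (hT : 0 ≤ T) (hJ : 0 < J) (hε : 0 < ε)
    (E : ℝ → ℝ) (hEcont : ContinuousOn E (Set.Icc 0 T))
    (hE0 : E 0 = 0) (hEnonneg : ∀ t ∈ Set.Icc (0 : ℝ) T, 0 ≤ E t)
    (hEineq : ∀ t ∈ Set.Icc (0 : ℝ) T, E t ≤ 2 * J * t * (2 * ε + E t ^ 2))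
    (hdisc : J ^ 2 * T ^ 2 * ε ≤ 1 / 64) :
    ∀ t ∈ Set.Icc (0 : ℝ) T,
      E t ≤ (1 - Real.sqrt (1 - 32 * J ^ 2 * t ^ 2 * ε)) / (4 * J * t) ∧
      (1 - Real.sqrt (1 - 32 * J ^ 2 * t ^ 2 * ε)) / (4 * J * t) ≤ 8 * J * t * ε :=
  stmt11_general T J ε hJ hε E hEcont hE0 hEineq hdisc
end

section
/- Let k ≥ 2 be an even integer and let μ be a probability distribution on pairs (α, α') ∈ [−1,1]² with α, α' independent and identically distributed. Let ζ be a random variable (independent of α, α') satisfying E[|ζ|^k] ≤ (C/√d)^k for some constant C. Then E[(αα' + √((1−α²)(1−α'²)) ζ)^k] ≤ (E[α^k])² + O_{k,C}(1/√d), where the implicit constant depends only on k and C. -/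
/-!
Expanding `(αα' + √((1-α²)(1-α'²)) ζ)^k` binomially, the pure term integrates to
`(E[α^k])²` by independence and identical distribution, while every other term contains
`|ζ|^j` with `1 ≤ j ≤ k` against coefficients bounded by `1`. Comparing `|ζ|^j t^(k-j)` with
`|ζ|^k + t^k` turns the hypothesis `E|ζ|^k ≤ t^k`, `t = C/√d`, into `E|ζ|^j ≤ 2 t^j = O(1/√d)`.
-/

open MeasureTheory ProbabilityTheory Finset

lemma pow_mul_pow_sub_le_pow_add_pow {x t : ℝ} (hx : 0 ≤ x) (ht : 0 ≤ t) {j k : ℕ}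
    (hjk : j ≤ k) : x ^ j * t ^ (k - j) ≤ x ^ k + t ^ k := by
  calc x ^ j * t ^ (k - j) ≤ max x t ^ j * max x t ^ (k - j) := by gcongr <;> simp
    _ = max x t ^ k := by rw [← pow_add, Nat.add_sub_cancel' hjk]
    _ ≤ x ^ k + t ^ k := by
      rcases max_cases x t with ⟨h, -⟩ | ⟨h, -⟩ <;> rw [h] <;> simp [hx, ht, pow_nonneg]

lemma abs_add_pow_sub_pow_le {x y : ℝ} (hx : |x| ≤ 1) (k : ℕ) :
    |(x + y) ^ k - x ^ k| ≤ ∑ i ∈ range k, (k.choose i : ℝ) * |y| ^ (k - i) := by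
  rw [add_pow, sum_range_succ, Nat.sub_self, pow_zero, Nat.choose_self, Nat.cast_one,
    mul_one, mul_one, add_sub_cancel_right]
  refine (abs_sum_le_sum_abs _ _).trans (sum_le_sum fun i _ => ?_)
  rw [abs_mul, abs_mul, abs_pow, abs_pow, Nat.abs_cast, mul_comm]
  gcongr
  exact mul_le_of_le_one_left (by positivity) (pow_le_one₀ (abs_nonneg x) hx)

lemma sum_range_choose_le_two_pow (k : ℕ) : ∑ i ∈ range k, (k.choose i : ℝ) ≤ 2 ^ k := by
  have := sum_range_succ (fun i => (k.choose i : ℝ)) k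
  rw [← Nat.cast_sum, Nat.sum_range_choose, Nat.cast_pow, Nat.cast_ofNat] at this
  linarith [(Nat.cast_nonneg (k.choose k) : (0 : ℝ) ≤ _)]

lemma abs_sqrt_one_sub_sq_mul_one_sub_sq_le_one (a : ℝ) {b : ℝ} (hb : |b| ≤ 1) :
    |Real.sqrt ((1 - a ^ 2) * (1 - b ^ 2))| ≤ 1 := by
  rw [← sq_le_one_iff_abs_le_one] at hb
  rw [abs_of_nonneg (Real.sqrt_nonneg _), Real.sqrt_le_one]
  exact mul_le_one₀ (by linarith [sq_nonneg a]) (by linarith) (by linarith [sq_nonneg b])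

lemma div_pow_le_max_one_pow_div {C s : ℝ} (hC : 0 ≤ C) (hs : 1 ≤ s) {j k : ℕ}
    (hj : 1 ≤ j) (hjk : j ≤ k) : (C / s) ^ j ≤ max C 1 ^ k / s := by
  rw [div_pow, div_le_div_iff₀ (by positivity) (by positivity)]
  gcongr
  · calc C ^ j ≤ max C 1 ^ j := by gcongr; exact le_max_left _ _
      _ ≤ max C 1 ^ k := pow_le_pow_right₀ (le_max_right _ _) hjk
  · exact le_self_pow₀ hs (by omega)

section Moments

variable {Ω : Type*} {mΩ : MeasurableSpace Ω} {P : Measure Ω} {ζ : Ω → ℝ} {j k : ℕ}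

lemma integrable_abs_pow_of_le [IsFiniteMeasure P] (hζ : AEStronglyMeasurable ζ P)
    (hk : Integrable (fun ω => |ζ ω| ^ k) P) (hjk : j ≤ k) :
    Integrable (fun ω => |ζ ω| ^ j) P := by
  refine ((integrable_const 1).add hk).mono' (hζ.norm.pow j) (ae_of_all _ fun ω => ?_)
  have := pow_mul_pow_sub_le_pow_add_pow (abs_nonneg (ζ ω)) zero_le_one hjk
  rw [one_pow, mul_one] at this
  simpa [abs_of_nonneg (pow_nonneg (abs_nonneg (ζ ω)) j), add_comm] using this

lemma integral_abs_pow_le_two_mul_pow [IsProbabilityMeasure P] {t : ℝ} (ht : 0 < t)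
    (hζ : AEStronglyMeasurable ζ P) (hk : Integrable (fun ω => |ζ ω| ^ k) P)
    (hmom : ∫ ω, |ζ ω| ^ k ∂P ≤ t ^ k) (hjk : j ≤ k) :
    ∫ ω, |ζ ω| ^ j ∂P ≤ 2 * t ^ j := by
  have hj := integrable_abs_pow_of_le hζ hk hjk
  have hscaled : (∫ ω, |ζ ω| ^ j ∂P) * t ^ (k - j) ≤ 2 * t ^ j * t ^ (k - j) :=
    calc (∫ ω, |ζ ω| ^ j ∂P) * t ^ (k - j) = ∫ ω, |ζ ω| ^ j * t ^ (k - j) ∂P :=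
          (integral_mul_const _ _).symm
      _ ≤ ∫ ω, (|ζ ω| ^ k + t ^ k) ∂P :=
          integral_mono (hj.mul_const _) (hk.add (integrable_const _)) fun ω =>
            pow_mul_pow_sub_le_pow_add_pow (abs_nonneg _) ht.le hjk
      _ = (∫ ω, |ζ ω| ^ k ∂P) + t ^ k := by
          rw [integral_add hk (integrable_const _), integral_const, probReal_univ, one_smul]
      _ ≤ 2 * t ^ j * t ^ (k - j) := by
          rw [mul_assoc, ← pow_add, Nat.add_sub_cancel' hjk]; linarith
  exact le_of_mul_le_mul_right hscaled (pow_pos ht _)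

lemma integral_add_mul_pow_le [IsProbabilityMeasure P] {f g : Ω → ℝ}
    (hf : AEStronglyMeasurable f P) (hg : AEStronglyMeasurable g P)
    (hζ : AEStronglyMeasurable ζ P) (hf1 : ∀ ω, |f ω| ≤ 1) (hg1 : ∀ ω, |g ω| ≤ 1)
    (hk : Integrable (fun ω => |ζ ω| ^ k) P) :
    ∫ ω, (f ω + g ω * ζ ω) ^ k ∂P ≤
      ∫ ω, f ω ^ k ∂P + ∑ i ∈ range k, (k.choose i : ℝ) * ∫ ω, |ζ ω| ^ (k - i) ∂P := by
  have hgζ : ∀ ω, |g ω * ζ ω| ≤ |ζ ω| := fun ω => by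
    rw [abs_mul]; exact mul_le_of_le_one_left (abs_nonneg _) (hg1 ω)
  have hdiff : ∀ ω, |(f ω + g ω * ζ ω) ^ k - f ω ^ k| ≤
      ∑ i ∈ range k, (k.choose i : ℝ) * |ζ ω| ^ (k - i) := fun ω =>
    (abs_add_pow_sub_pow_le (hf1 ω) k).trans (sum_le_sum fun i _ =>
      mul_le_mul_of_nonneg_left (pow_le_pow_left₀ (abs_nonneg _) (hgζ ω) _) (Nat.cast_nonneg _))
  have hsum : Integrable (fun ω => ∑ i ∈ range k, (k.choose i : ℝ) * |ζ ω| ^ (k - i)) P :=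
    integrable_finsetSum _ fun i _ =>
      (integrable_abs_pow_of_le hζ hk (Nat.sub_le k i)).const_mul _
  have hfk1 : ∀ ω, |f ω ^ k| ≤ 1 := fun ω => by
    rw [abs_pow]; exact pow_le_one₀ (abs_nonneg _) (hf1 ω)
  have hfk : Integrable (fun ω => f ω ^ k) P :=
    (integrable_const 1).mono' (hf.pow k) (ae_of_all _ hfk1)
  have hlhs : Integrable (fun ω => (f ω + g ω * ζ ω) ^ k) P :=
    ((integrable_const 1).add hsum).mono' ((hf.add (hg.mul hζ)).pow k) <| ae_of_all _ fun ω => by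
      have := hdiff ω; simp only [Pi.add_apply, Real.norm_eq_abs]
      linarith [abs_sub_abs_le_abs_sub ((f ω + g ω * ζ ω) ^ k) (f ω ^ k), hfk1 ω]
  calc ∫ ω, (f ω + g ω * ζ ω) ^ k ∂P
      ≤ ∫ ω, (f ω ^ k + ∑ i ∈ range k, (k.choose i : ℝ) * |ζ ω| ^ (k - i)) ∂P :=
        integral_mono hlhs (hfk.add hsum) fun ω => by
          have := hdiff ω; linarith [le_abs_self ((f ω + g ω * ζ ω) ^ k - f ω ^ k)]
    _ = _ := by
        rw [integral_add hfk hsum, integral_finsetSum _ fun i _ =>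
          (integrable_abs_pow_of_le hζ hk (Nat.sub_le k i)).const_mul _]
        simp only [integral_const_mul]

lemma integral_mul_pow_eq_sq {X Y : Ω → ℝ} (hX : Measurable X) (hY : Measurable Y)
    (hXY : IndepFun X Y P) (hid : IdentDistrib X Y P P) (k : ℕ) :
    ∫ ω, (X ω * Y ω) ^ k ∂P = (∫ ω, X ω ^ k ∂P) ^ 2 := by
  have hpow : Measurable fun x : ℝ => x ^ k := measurable_id.pow_const k
  have h := (hXY.comp hpow hpow).integral_mul_eq_mul_integral
    (hX.pow_const k).aestronglyMeasurable (hY.pow_const k).aestronglyMeasurable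
  simp only [Pi.mul_apply, Function.comp_def] at h
  simp_rw [mul_pow, h, sq]
  congr 1
  exact ((hid.comp hpow).integral_eq).symm

end Moments

theorem stmt12_general (k : ℕ) (C : ℝ) (hC : 0 < C) :
    ∃ D : ℝ, 0 < D ∧
      ∀ (Ω : Type) (_ : MeasurableSpace Ω) (P : Measure Ω), IsProbabilityMeasure P →
      ∀ d : ℕ, 0 < d →
      ∀ α α' ζ : Ω → ℝ,
        Measurable α → Measurable α' → Measurable ζ →
        (∀ ω, α ω ∈ Set.Icc (-1 : ℝ) 1) → (∀ ω, α' ω ∈ Set.Icc (-1 : ℝ) 1) →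
        IndepFun α α' P → IdentDistrib α α' P P →
        IndepFun (fun ω => (α ω, α' ω)) ζ P →
        Integrable (fun ω => |ζ ω| ^ k) P →
        (∫ ω, |ζ ω| ^ k ∂P) ≤ (C / Real.sqrt d) ^ k →
        (∫ ω, (α ω * α' ω +
            Real.sqrt ((1 - α ω ^ 2) * (1 - α' ω ^ 2)) * ζ ω) ^ k ∂P)
          ≤ (∫ ω, α ω ^ k ∂P) ^ 2 + D / Real.sqrt d := by
  refine ⟨2 ^ (k + 1) * max C 1 ^ k, by positivity, ?_⟩
  intro Ω _ P _ d hd α α' ζ hα hα' hζ hαI hα'I hind hid _ hk hmom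
  have hs : 1 ≤ Real.sqrt d := Real.one_le_sqrt.mpr (by exact_mod_cast hd)
  have hα1 (ω : Ω) : |α ω| ≤ 1 := abs_le.mpr (hαI ω)
  have hα'1 (ω : Ω) : |α' ω| ≤ 1 := abs_le.mpr (hα'I ω)
  have hmom_le (i : ℕ) (hi : i ∈ range k) :
      ∫ ω, |ζ ω| ^ (k - i) ∂P ≤ 2 * (max C 1 ^ k / Real.sqrt d) := by
    refine (integral_abs_pow_le_two_mul_pow (by positivity) hζ.aestronglyMeasurable hk hmom
      (Nat.sub_le k i)).trans ?_
    gcongr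
    exact div_pow_le_max_one_pow_div hC.le hs (by simp at hi; omega) (Nat.sub_le k i)
  calc _ ≤ ∫ ω, (α ω * α' ω) ^ k ∂P +
          ∑ i ∈ range k, (k.choose i : ℝ) * ∫ ω, |ζ ω| ^ (k - i) ∂P :=
        integral_add_mul_pow_le (hα.mul hα').aestronglyMeasurable (by fun_prop)
          hζ.aestronglyMeasurable
          (fun ω => by rw [abs_mul]; exact mul_le_one₀ (hα1 ω) (abs_nonneg _) (hα'1 ω))
          (fun ω => abs_sqrt_one_sub_sq_mul_one_sub_sq_le_one (α ω) (hα'1 ω)) hk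
    _ ≤ (∫ ω, α ω ^ k ∂P) ^ 2 +
          (∑ i ∈ range k, (k.choose i : ℝ)) * (2 * (max C 1 ^ k / Real.sqrt d)) := by
        rw [integral_mul_pow_eq_sq hα hα' hind hid, sum_mul]
        gcongr with i hi
        exact hmom_le i hi
    _ ≤ (∫ ω, α ω ^ k ∂P) ^ 2 + 2 ^ k * (2 * (max C 1 ^ k / Real.sqrt d)) := by
        gcongr
        exact sum_range_choose_le_two_pow k
    _ = (∫ ω, α ω ^ k ∂P) ^ 2 + 2 ^ (k + 1) * max C 1 ^ k / Real.sqrt d := by ring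

/-- Minkowski-type moment bound: for i.i.d. `α, α'` with values in `[−1,1]`, independent
`ζ` with `E[|ζ|^k] ≤ (C/√d)^k`, and even `k`,
`E[(αα' + √((1−α²)(1−α'²)) ζ)^k] ≤ (E[α^k])² + O_{k,C}(1/√d)`. -/
theorem stmt12 (k : ℕ) (hk2 : 2 ≤ k) (hke : Even k) (C : ℝ) (hC : 0 < C) :
    ∃ D : ℝ, 0 < D ∧
      ∀ (Ω : Type) (_ : MeasurableSpace Ω) (P : Measure Ω), IsProbabilityMeasure P →
      ∀ d : ℕ, 0 < d →
      ∀ α α' ζ : Ω → ℝ,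
        Measurable α → Measurable α' → Measurable ζ →
        (∀ ω, α ω ∈ Set.Icc (-1 : ℝ) 1) → (∀ ω, α' ω ∈ Set.Icc (-1 : ℝ) 1) →
        IndepFun α α' P → IdentDistrib α α' P P →
        IndepFun (fun ω => (α ω, α' ω)) ζ P →
        Integrable (fun ω => |ζ ω| ^ k) P →
        (∫ ω, |ζ ω| ^ k ∂P) ≤ (C / Real.sqrt d) ^ k →
        (∫ ω, (α ω * α' ω +
            Real.sqrt ((1 - α ω ^ 2) * (1 - α' ω ^ 2)) * ζ ω) ^ k ∂P)
          ≤ (∫ ω, α ω ^ k ∂P) ^ 2 + D / Real.sqrt d :=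
  stmt12_general k C hC
end

section
/- Let p ∈ (0, 1/2) and u ∈ ℝᵈ with ‖u‖ = 1. Consider Δ : [m] → ℝᵈ where Δ(i) = u for a p-fraction of indices and Δ(i) = 0 for the rest, and the flow dΔ_t(i)/dt = −(m⁻¹ Σ_j Δ_t(j)) starting at Δ₀ = Δ. Then at t = 0, the derivative of m⁻¹ Σ_i ‖Δ_t(i)‖ equals −p·p + (1−p)·p = p(1 − 2p) > 0; in particular the average norm m⁻¹Σ_i‖Δ_t(i)‖ is strictly increasing at t = 0. -/
/-!
At `t = 0` every particle moves with the common velocity `-(m⁻¹ Σ_j Δ₀ j) = -p • u`.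
A particle sitting at `u` therefore loses norm at rate `⟪u, -p • u⟫ / ‖u‖ = -p`, while a particle
sitting at `0` gains norm at rate `‖-p • u‖ = p` (only from the right: the norm has a corner at `0`).
Averaging over the `p`-fraction and the `(1 - p)`-fraction gives `-p² + (1 - p) p = p (1 - 2p)`.
-/

open Set Filter Topology Finset
open scoped RealInnerProductSpace

theorem HasDerivAt.hasDerivWithinAt_norm_Ici_of_eq_zero {F : Type*} [NormedAddCommGroup F]
    [NormedSpace ℝ F] {f : ℝ → F} {v : F} {x : ℝ} (hf : HasDerivAt f v x) (h0 : f x = 0) :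
    HasDerivWithinAt (fun t => ‖f t‖) ‖v‖ (Ici x) x := by
  rw [hasDerivWithinAt_iff_tendsto_slope, Ici_sdiff_left]
  have hslope : Tendsto (slope f x) (𝓝[>] x) (𝓝 v) :=
    hf.tendsto_slope.mono_left (nhdsWithin_mono _ fun t ht => ne_of_gt ht)
  refine (continuous_norm.tendsto v |>.comp hslope).congr' ?_
  filter_upwards [self_mem_nhdsWithin] with t (ht : x < t)
  simp [slope_def_module, h0, norm_smul, abs_of_pos (sub_pos.2 ht)]

theorem HasDerivAt.norm {F : Type*} [NormedAddCommGroup F] [InnerProductSpace ℝ F]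
    {f : ℝ → F} {v : F} {x : ℝ} (hf : HasDerivAt f v x) (h0 : f x ≠ 0) :
    HasDerivAt (fun t => ‖f t‖) (⟪f x, v⟫ / ‖f x‖) x := by
  have := hf.norm_sq.sqrt (by positivity)
  simpa [Real.sqrt_sq (norm_nonneg _), mul_div_mul_left] using this

theorem Fintype.sum_ite_mem_const {ι R : Type*} [Fintype ι] [DecidableEq ι] [Ring R]
    (S : Finset ι) (a b : R) :
    ∑ i, (if i ∈ S then a else b) = #S * a + (Fintype.card ι - #S) * b := by
  rw [Finset.sum_ite]
  have hcompl : ({i | i ∉ S} : Finset ι) = Sᶜ := by ext; simp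
  simp [hcompl, card_compl, Nat.cast_sub (card_le_univ S)]

/-- Counterexample showing the L1 potential can increase under the mean-interaction flow:
if `Δ₀(i) = u` on a `p`-fraction of indices (with `p < 1/2`) and `0` elsewhere, the
(right) derivative of `m⁻¹ Σ_i ‖Δ_t(i)‖` at `t = 0` equals `−p·p + (1−p)·p = p(1−2p) > 0`. -/
theorem stmt14 (d m : ℕ) (hm : 0 < m) (p : ℝ) (hp : p ∈ Set.Ioo (0 : ℝ) (1 / 2))
    (u : EuclideanSpace ℝ (Fin d)) (hu : ‖u‖ = 1)
    (S : Finset (Fin m)) (hS : (S.card : ℝ) = p * m)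
    (Δ : ℝ → Fin m → EuclideanSpace ℝ (Fin d))
    (hΔ0 : ∀ i, Δ 0 i = if i ∈ S then u else 0)
    (hflow : ∀ (t : ℝ) (i : Fin m), HasDerivAt (fun t => Δ t i)
      (-((m : ℝ)⁻¹ • ∑ j, Δ t j)) t) :
    HasDerivWithinAt (fun t => (m : ℝ)⁻¹ * ∑ i, ‖Δ t i‖)
        (p * (1 - 2 * p)) (Set.Ici 0) 0 ∧
      0 < p * (1 - 2 * p) := by
  obtain ⟨hp0, hp_lt_half⟩ := hp
  have hm0 : (m : ℝ) ≠ 0 := by positivity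
  have hvelocity : -((m : ℝ)⁻¹ • ∑ j, Δ 0 j) = (-p) • u := by
    have hsum : ∑ j, Δ 0 j = (#S : ℝ) • u := by simp [hΔ0, ← Nat.cast_smul_eq_nsmul ℝ]
    rw [hsum, hS, smul_smul, mul_comm p, inv_mul_cancel_left₀ hm0, neg_smul]
  have hder : ∀ i, HasDerivWithinAt (fun t => ‖Δ t i‖) (if i ∈ S then -p else p) (Ici 0) 0 := by
    intro i
    have hi := hflow 0 i
    rw [hvelocity] at hi
    by_cases hiS : i ∈ S
    · have h0 : Δ 0 i = u := by simp [hΔ0, hiS]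
      simpa [hiS, h0, hu, real_inner_smul_right] using
        (hi.norm (by simp [h0, ← norm_ne_zero_iff, hu])).hasDerivWithinAt
    · simpa [hiS, hu, norm_smul, abs_of_pos hp0] using
        hi.hasDerivWithinAt_norm_Ici_of_eq_zero (by simp [hΔ0, hiS])
  refine ⟨?_, mul_pos hp0 (by linarith)⟩
  have hmean : (m : ℝ)⁻¹ * ∑ i, (if i ∈ S then -p else p) = p * (1 - 2 * p) := by
    rw [Fintype.sum_ite_mem_const, Fintype.card_fin, hS]
    field_simp
    ring
  exact hmean ▸ (HasDerivWithinAt.fun_sum fun i _ => hder i).const_mul (m : ℝ)⁻¹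
end
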